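/- Let Γ be an even Artin graph with Artin group G. For any f, g ∈ G and A, B ⊆ V, there exist a ∈ G_A and b ∈ G_B such that fG_Af^{-1} ∩ gG_Bg^{-1} = (fa)G_C(fa)^{-1} ∩ (gb)G_C(gb)^{-1}, where C = A ∩ B. -/

import Mathlib

/-- An Artin graph: a simplicial graph with even/arbitrary labels; `m u v = 0`
means `u` and `v` are not joined by an edge, otherwise `m u v ≥ 2` is the label. -/
structure ArtinGraph (V : Type) where
  m : V → V → ℕ
  symm : ∀ u v, m u v = m v u
  loopless : ∀ v, m v v = 0
  ne_one : ∀ u v, m u v ≠ 1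

namespace ArtinGraph

variable {V : Type}

/-- `word u v n` is the prefix of length `n` of the alternating word `uvuv…`. -/
def word : V → V → ℕ → FreeGroup V
  | _, _, 0 => 1
  | u, v, n + 1 => FreeGroup.of u * word v u n

/-- The Artin relations of the graph. -/
def rels (Γ : ArtinGraph V) : Set (FreeGroup V) :=
  {r | ∃ u v, Γ.m u v ≠ 0 ∧ r = word u v (Γ.m u v) * (word v u (Γ.m u v))⁻¹}

/-- The Artin group of an Artin graph. -/
def ArtinGroup (Γ : ArtinGraph V) : Type := PresentedGroup Γ.rels

instance (Γ : ArtinGraph V) : Group Γ.ArtinGroup :=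
  inferInstanceAs (Group (PresentedGroup Γ.rels))

/-- The generator of the Artin group corresponding to a vertex. -/
def gen (Γ : ArtinGraph V) (v : V) : Γ.ArtinGroup := PresentedGroup.of v

/-- The standard parabolic subgroup on a set `S` of vertices. -/
def std (Γ : ArtinGraph V) (S : Set V) : Subgroup Γ.ArtinGroup :=
  Subgroup.closure (Γ.gen '' S)

/-- The conjugate `g H g⁻¹` of a subgroup. -/
def conjP {G : Type*} [Group G] (g : G) (H : Subgroup G) : Subgroup G :=
  H.map (MulAut.conj g).toMonoidHom

/-- A parabolic subgroup is a conjugate of a standard parabolic subgroup. -/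
def IsParabolic (Γ : ArtinGraph V) (P : Subgroup Γ.ArtinGroup) : Prop :=
  ∃ (S : Set V) (g : Γ.ArtinGroup), P = conjP g (Γ.std S)

/-- An Artin graph is even if all labels are even. -/
def IsEven (Γ : ArtinGraph V) : Prop := ∀ u v, Even (Γ.m u v)

/-- The FC condition for even Artin graphs: in every triangle at least two of
the three labels are equal to `2`. -/
def IsFC (Γ : ArtinGraph V) : Prop :=
  ∀ u v w, Γ.m u v ≠ 0 → Γ.m v w ≠ 0 → Γ.m w u ≠ 0 →
    (Γ.m u v = 2 ∧ Γ.m v w = 2) ∨ (Γ.m v w = 2 ∧ Γ.m w u = 2) ∨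
      (Γ.m u v = 2 ∧ Γ.m w u = 2)

/-- The link of a vertex. -/
def lk (Γ : ArtinGraph V) (x : V) : Set V := {u | Γ.m x u ≠ 0}

/-- The star of a vertex. -/
def star (Γ : ArtinGraph V) (x : V) : Set V := insert x (Γ.lk x)

end ArtinGraph

/-!
Put `h = f⁻¹ g`. Since all labels are even, `v ↦ v` for `v ∈ S` and `v ↦ 1` otherwise respects the
Artin relations, so it defines a retraction `ρ_S : G → G_S`. If `x = f y f⁻¹ = g z g⁻¹` with
`y ∈ G_A` and `z ∈ G_B`, then `y = h z h⁻¹`, and applying `ρ_A` gives `y = ρ_A(h) ρ_A(z) ρ_A(h)⁻¹`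
with `ρ_A(z) ∈ G_{A ∩ B}`. Hence `a = ρ_A(f⁻¹ g)` works, and symmetrically `b = ρ_B(g⁻¹ f)`.
-/

namespace ArtinGraph

section Conjugates

variable {G : Type*} [Group G]

lemma mem_conjP {g x : G} {H : Subgroup G} : x ∈ conjP g H ↔ ∃ y ∈ H, g * y * g⁻¹ = x := by
  simp [conjP, Subgroup.mem_map]

lemma conjP_mul_le {P R : Subgroup G} (f : G) {a : G} (ha : a ∈ P) (hRP : R ≤ P) :
    conjP (f * a) R ≤ conjP f P := by
  rintro _ ⟨y, hy, rfl⟩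
  exact mem_conjP.2 ⟨a * y * a⁻¹, mul_mem (mul_mem ha (hRP hy)) (inv_mem ha), by simp [mul_assoc]⟩

lemma inf_conjP_le_conjP {P Q R : Subgroup G} (ρ : G →* G) (hfix : ∀ {y}, y ∈ P → ρ y = y)
    (hQR : Q.map ρ ≤ R) (f g : G) :
    conjP f P ⊓ conjP g Q ≤ conjP (f * ρ (f⁻¹ * g)) R := by
  rintro x ⟨hxf, hxg⟩
  obtain ⟨y, hy, rfl⟩ := mem_conjP.1 hxf
  obtain ⟨z, hz, hzy⟩ := mem_conjP.1 hxg
  have hyz : y = f⁻¹ * (g * z * g⁻¹) * f := by rw [hzy]; group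
  refine mem_conjP.2 ⟨ρ z, hQR ⟨z, hz, rfl⟩, ?_⟩
  conv_rhs => rw [← hfix hy, hyz]
  simp [mul_assoc]

end Conjugates

variable {V : Type}

def altProd {G : Type*} [Group G] : G → G → ℕ → G
  | _, _, 0 => 1
  | x, y, n + 1 => x * altProd y x n

lemma map_word {G : Type*} [Group G] (φ : FreeGroup V →* G) (u v : V) (n : ℕ) :
    φ (word u v n) = altProd (φ (.of u)) (φ (.of v)) n := by
  induction n generalizing u v with
  | zero => simp [word, altProd]
  | succ n ih => simp [word, altProd, ih]

lemma altProd_one_comm_of_even {G : Type*} [Group G] (x : G) {n : ℕ} (hn : Even n) :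
    altProd x 1 n = altProd 1 x n := by
  obtain ⟨k, rfl⟩ := hn
  induction k with
  | zero => rfl
  | succ k ih =>
    rw [show k + 1 + (k + 1) = k + k + 1 + 1 by ring]
    simp only [altProd, one_mul, ih]

lemma altProd_gen_comm (Γ : ArtinGraph V) {u v : V} (h : Γ.m u v ≠ 0) :
    altProd (Γ.gen u) (Γ.gen v) (Γ.m u v) = altProd (Γ.gen v) (Γ.gen u) (Γ.m u v) := by
  have := PresentedGroup.mk_eq_mk_of_mul_inv_mem (rels := Γ.rels) ⟨u, v, h, rfl⟩
  rwa [map_word, map_word] at this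

lemma std_mono (Γ : ArtinGraph V) {S T : Set V} (h : S ⊆ T) : Γ.std S ≤ Γ.std T :=
  Subgroup.closure_mono (Set.image_mono h)

lemma std_univ (Γ : ArtinGraph V) : Γ.std Set.univ = ⊤ := by
  rw [std, Set.image_univ]
  exact PresentedGroup.closure_range_of Γ.rels

open Classical in
noncomputable def retraction (Γ : ArtinGraph V) (hEven : Γ.IsEven) (S : Set V) :
    Γ.ArtinGroup →* Γ.ArtinGroup :=
  PresentedGroup.toGroup (f := fun v => if v ∈ S then Γ.gen v else 1) <| by
    rintro _ ⟨u, v, hm, rfl⟩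
    rw [map_mul, map_inv, map_word, map_word, mul_inv_eq_one,
      FreeGroup.lift_apply_of, FreeGroup.lift_apply_of]
    by_cases hu : u ∈ S <;> by_cases hv : v ∈ S <;> simp only [hu, hv, if_true, if_false]
    · exact Γ.altProd_gen_comm hm
    · exact altProd_one_comm_of_even _ (hEven u v)
    · exact (altProd_one_comm_of_even _ (hEven u v)).symm

section Retraction

variable (Γ : ArtinGraph V) (hEven : Γ.IsEven) (S : Set V)

open Classical in
lemma retraction_gen (v : V) :
    Γ.retraction hEven S (Γ.gen v) = if v ∈ S then Γ.gen v else 1 :=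
  PresentedGroup.toGroup.of _

lemma retraction_apply_of_mem_std {x : Γ.ArtinGroup} (hx : x ∈ Γ.std S) :
    Γ.retraction hEven S x = x := by
  refine MonoidHom.eqOn_closure (f := Γ.retraction hEven S) (g := .id _) ?_ hx
  rintro _ ⟨v, hv, rfl⟩
  simp [retraction_gen, hv]

lemma map_std_retraction_le (T : Set V) :
    (Γ.std T).map (Γ.retraction hEven S) ≤ Γ.std (S ∩ T) := by
  rw [std, MonoidHom.map_closure, Subgroup.closure_le]
  rintro _ ⟨_, ⟨v, hvT, rfl⟩, rfl⟩
  rw [retraction_gen]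
  split_ifs with hvS
  · exact Subgroup.subset_closure ⟨v, ⟨hvS, hvT⟩, rfl⟩
  · exact one_mem _

lemma retraction_mem_std (x : Γ.ArtinGroup) : Γ.retraction hEven S x ∈ Γ.std S := by
  simpa using Γ.map_std_retraction_le hEven S Set.univ
    ⟨x, (Γ.std_univ).symm ▸ Subgroup.mem_top x, rfl⟩

end Retraction

end ArtinGraph

open ArtinGraph in
/-- in an even Artin group, for `f, g ∈ G` and `A, B ⊆ V` there are
`a ∈ G_A`, `b ∈ G_B` with
`fG_Af⁻¹ ∩ gG_Bg⁻¹ = (fa)G_C(fa)⁻¹ ∩ (gb)G_C(gb)⁻¹` where `C = A ∩ B`. -/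
theorem stmt3 {V : Type} (Γ : ArtinGraph V) (hEven : Γ.IsEven) (A B : Set V)
    (f g : Γ.ArtinGroup) :
    ∃ a ∈ Γ.std A, ∃ b ∈ Γ.std B,
      conjP f (Γ.std A) ⊓ conjP g (Γ.std B) =
        conjP (f * a) (Γ.std (A ∩ B)) ⊓ conjP (g * b) (Γ.std (A ∩ B)) := by
  refine ⟨_, Γ.retraction_mem_std hEven A (f⁻¹ * g), _, Γ.retraction_mem_std hEven B (g⁻¹ * f),
    le_antisymm (le_inf ?_ ?_) (inf_le_inf ?_ ?_)⟩
  · exact inf_conjP_le_conjP _ (Γ.retraction_apply_of_mem_std hEven A)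
      (Γ.map_std_retraction_le hEven A B) f g
  · rw [inf_comm, Set.inter_comm]
    exact inf_conjP_le_conjP _ (Γ.retraction_apply_of_mem_std hEven B)
      (Γ.map_std_retraction_le hEven B A) g f
  · exact conjP_mul_le f (Γ.retraction_mem_std hEven A _) (Γ.std_mono Set.inter_subset_left)
  · exact conjP_mul_le g (Γ.retraction_mem_std hEven B _) (Γ.std_mono Set.inter_subset_right)
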